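/- arXiv:1403.2249 — 7 statements merged into one kernel-verified Lean document; each statement's English description precedes it below -/
import Mathlib

section
/- Let r > 1, 0 < θ < π/2, r·cos θ < 1, and h > r/√(r² − 1). Then h·sin θ / √((1 − r²cos²θ)h² + r²cos²θ) ≥ 1, and arcosh( h·sin θ / √((1 − r²cos²θ)h² + r²cos²θ) ) = log( (h·sin θ + √((r² − 1)h² − r²)·cos θ) / √((1 − r²cos²θ)h² + r²cos²θ) ). -/
/-!
Writing `D = (1 - r² cos² θ) h² + r² cos² θ`, the identity `sin² θ + cos² θ = 1` gives
`(h sin θ)² - D = ((r² - 1) h² - r²) cos² θ`, so `x = h sin θ / √D` satisfies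
`√(x² - 1) = √((r² - 1) h² - r²) cos θ / √D`.
-/

open Real

/-- The inverse hyperbolic cosine on `[1, ∞)`, given by `arcosh x = log (x + √(x² − 1))`. -/
noncomputable def arcosh (x : ℝ) : ℝ := Real.log (x + Real.sqrt (x ^ 2 - 1))

theorem one_le_div_of_sq_sub_sq_eq_sq {a b d : ℝ} (ha : 0 ≤ a) (hd : 0 < d)
    (h : a ^ 2 - b ^ 2 = d ^ 2) : 1 ≤ a / d := by
  rw [one_le_div hd]
  exact (pow_le_pow_iff_left₀ hd.le ha two_ne_zero).1 (by nlinarith [sq_nonneg b])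

theorem arcosh_div_of_sq_sub_sq_eq_sq {a b d : ℝ} (hb : 0 ≤ b) (hd : 0 < d)
    (h : a ^ 2 - b ^ 2 = d ^ 2) : _root_.arcosh (a / d) = Real.log ((a + b) / d) := by
  have hsq : (a / d) ^ 2 - 1 = (b / d) ^ 2 := by
    field_simp
    linarith
  rw [_root_.arcosh, hsq, Real.sqrt_sq (div_nonneg hb hd.le), add_div]

theorem sq_lt_sq_sub_one_mul_sq {r h : ℝ} (hr : 1 < r) (hh : r / √(r ^ 2 - 1) < h) :
    r ^ 2 < (r ^ 2 - 1) * h ^ 2 := by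
  have hr1 : 0 < r ^ 2 - 1 := by nlinarith
  have hlt : r < h * √(r ^ 2 - 1) := (div_lt_iff₀ (Real.sqrt_pos.2 hr1)).1 hh
  calc r ^ 2 < (h * √(r ^ 2 - 1)) ^ 2 := pow_lt_pow_left₀ hlt (by linarith) two_ne_zero
    _ = (r ^ 2 - 1) * h ^ 2 := by rw [mul_pow, Real.sq_sqrt hr1.le, mul_comm]

theorem arcosh_lambert_cube_edge_length (r θ h : ℝ) (hr : 1 < r) (hθ0 : 0 < θ)
    (hθ1 : θ < π / 2) (hrθ : r * Real.cos θ < 1) (hh : r / Real.sqrt (r ^ 2 - 1) < h) :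
    1 ≤ h * Real.sin θ /
        Real.sqrt ((1 - r ^ 2 * Real.cos θ ^ 2) * h ^ 2 + r ^ 2 * Real.cos θ ^ 2) ∧
      _root_.arcosh (h * Real.sin θ /
          Real.sqrt ((1 - r ^ 2 * Real.cos θ ^ 2) * h ^ 2 + r ^ 2 * Real.cos θ ^ 2)) =
        Real.log ((h * Real.sin θ + Real.sqrt ((r ^ 2 - 1) * h ^ 2 - r ^ 2) * Real.cos θ) /
          Real.sqrt ((1 - r ^ 2 * Real.cos θ ^ 2) * h ^ 2 + r ^ 2 * Real.cos θ ^ 2)) := by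
  have hcos : 0 < cos θ := cos_pos_of_mem_Ioo ⟨by linarith [pi_pos], hθ1⟩
  have hsin : 0 < sin θ := sin_pos_of_pos_of_lt_pi hθ0 (by linarith [pi_pos])
  have hh0 : 0 < h := (div_pos (by linarith) (sqrt_pos.2 (by nlinarith))).trans hh
  have hE : 0 ≤ (r ^ 2 - 1) * h ^ 2 - r ^ 2 := by linarith [sq_lt_sq_sub_one_mul_sq hr hh]
  have hD : 0 < (1 - r ^ 2 * cos θ ^ 2) * h ^ 2 + r ^ 2 * cos θ ^ 2 := by
    have : 0 < 1 - r ^ 2 * cos θ ^ 2 := by nlinarith [mul_pos (zero_lt_one.trans hr) hcos]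
    positivity
  have hpyth : (h * sin θ) ^ 2 - (√((r ^ 2 - 1) * h ^ 2 - r ^ 2) * cos θ) ^ 2
      = √((1 - r ^ 2 * cos θ ^ 2) * h ^ 2 + r ^ 2 * cos θ ^ 2) ^ 2 := by
    rw [mul_pow, mul_pow, sq_sqrt hE, sq_sqrt hD.le]
    linear_combination h ^ 2 * sin_sq_add_cos_sq θ
  exact ⟨one_le_div_of_sq_sub_sq_eq_sq (by positivity) (sqrt_pos.2 hD) hpyth,
    arcosh_div_of_sq_sub_sq_eq_sq (by positivity) (sqrt_pos.2 hD) hpyth⟩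
end

section
/- Let r > 0 and C ∈ ℝ, and define F(h) = log( (√((1 − r²)h² + r²) + 1) / √(h² − 1) ) − C·√((1 − r²)h² + r²). Then for every h > 1 with (1 − r²)h² + r² > 0, F has derivative at h equal to −h / ( (h² − 1)·√((1 − r²)h² + r²) ) · G(h), where G(h) = C(1 − r²)(h² − 1) + 1. -/
/-!
Write `s = √((1 - r²)h² + r²)`. The identity `s² - 1 = (1 - r²)(h² - 1)` turns the logarithmic
derivative `(1 - r²)h / (s (s + 1))` of `s + 1` into `h (s - 1) / (s (h² - 1))`, so the logarithm
has derivative `-h / ((h² - 1) s)`. The term `-C s` contributes `-C (1 - r²) h / s`, which is the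
same factor times `C (1 - r²)(h² - 1)`.
-/

open Real

lemma hasDerivAt_sqrt_quadratic {a b x : ℝ} (hx : 0 < a * x ^ 2 + b) :
    HasDerivAt (fun t => √(a * t ^ 2 + b)) (a * x / √(a * x ^ 2 + b)) x := by
  have hquad : HasDerivAt (fun t => a * t ^ 2 + b) (a * (2 * x)) x := by
    simpa using ((hasDerivAt_pow 2 x).const_mul a).add_const b
  convert hquad.sqrt hx.ne' using 1
  field_simp

lemma hasDerivAt_log_sqrt_add_one_div_sqrt {r x : ℝ} (hx : 1 < x)
    (hpos : 0 < (1 - r ^ 2) * x ^ 2 + r ^ 2) :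
    HasDerivAt (fun t => log ((√((1 - r ^ 2) * t ^ 2 + r ^ 2) + 1) / √(t ^ 2 - 1)))
      (-x / ((x ^ 2 - 1) * √((1 - r ^ 2) * x ^ 2 + r ^ 2))) x := by
  have hx2 : 0 < x ^ 2 - 1 := by nlinarith
  have hs := hasDerivAt_sqrt_quadratic hpos
  have hu : HasDerivAt (fun t => √(t ^ 2 - 1)) (x / √(x ^ 2 - 1)) x := by
    simpa [← sub_eq_add_neg] using
      hasDerivAt_sqrt_quadratic (a := 1) (b := -1) (x := x) (by linarith)
  have hs_pos : 0 < √((1 - r ^ 2) * x ^ 2 + r ^ 2) := sqrt_pos.mpr hpos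
  have hu_pos : 0 < √(x ^ 2 - 1) := sqrt_pos.mpr hx2
  refine (((hs.add_const 1).div hu hu_pos.ne').log
    (div_ne_zero (by positivity) hu_pos.ne')).congr_deriv ?_
  have hs_sq : √((1 - r ^ 2) * x ^ 2 + r ^ 2) ^ 2 = (1 - r ^ 2) * (x ^ 2 - 1) + 1 := by
    rw [sq_sqrt hpos.le]; ring
  have hu_sq : √(x ^ 2 - 1) ^ 2 = x ^ 2 - 1 := sq_sqrt hx2.le
  simp only [Pi.div_apply]
  generalize √((1 - r ^ 2) * x ^ 2 + r ^ 2) = s at *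
  generalize √(x ^ 2 - 1) = u at *
  field_simp
  linear_combination ((1 - r ^ 2) * (x ^ 2 - 1) + s + 1) * hu_sq - (x ^ 2 - 1) * hs_sq

theorem hasDerivAt_F_general (r C h : ℝ) (hh : 1 < h)
    (hpos : (1 - r ^ 2) * h ^ 2 + r ^ 2 > 0) :
    HasDerivAt
      (fun t : ℝ => Real.log ((Real.sqrt ((1 - r ^ 2) * t ^ 2 + r ^ 2) + 1) /
          Real.sqrt (t ^ 2 - 1)) -
        C * Real.sqrt ((1 - r ^ 2) * t ^ 2 + r ^ 2))
      (-h / ((h ^ 2 - 1) * Real.sqrt ((1 - r ^ 2) * h ^ 2 + r ^ 2)) *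
        (C * (1 - r ^ 2) * (h ^ 2 - 1) + 1)) h := by
  have hh2 : h ^ 2 - 1 ≠ 0 := by nlinarith
  have hs : √((1 - r ^ 2) * h ^ 2 + r ^ 2) ≠ 0 := (sqrt_pos.mpr hpos).ne'
  refine ((hasDerivAt_log_sqrt_add_one_div_sqrt hh hpos).sub
    ((hasDerivAt_sqrt_quadratic hpos).const_mul C)).congr_deriv ?_
  field_simp
  ring

theorem hasDerivAt_F (r C h : ℝ) (hr : 0 < r) (hh : 1 < h)
    (hpos : (1 - r ^ 2) * h ^ 2 + r ^ 2 > 0) :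
    HasDerivAt
      (fun t : ℝ => Real.log ((Real.sqrt ((1 - r ^ 2) * t ^ 2 + r ^ 2) + 1) /
          Real.sqrt (t ^ 2 - 1)) -
        C * Real.sqrt ((1 - r ^ 2) * t ^ 2 + r ^ 2))
      (-h / ((h ^ 2 - 1) * Real.sqrt ((1 - r ^ 2) * h ^ 2 + r ^ 2)) *
        (C * (1 - r ^ 2) * (h ^ 2 - 1) + 1)) h :=
  hasDerivAt_F_general r C h hh hpos
end

section
/- Let 0 < r < 1 and C > 0, and define F(h) = log( (√((1 − r²)h² + r²) + 1) / √(h² − 1) ) − C·√((1 − r²)h² + r²). Then F is strictly decreasing on the interval (1, ∞). -/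
/-! With s = √((1 - r²)h² + r²), which increases strictly from 1 as h runs over (1, ∞), one has
s² - 1 = (1 - r²)(h² - 1), so the argument of the logarithm is √(1 - r²) · √((s + 1)/(s - 1)).
This decreases strictly in s, and so does -C s. -/

open Real Set

lemma add_one_div_sqrt_sq_sub_one_eq_sqrt_div {s : ℝ} (hs : 1 < s) :
    (s + 1) / √(s ^ 2 - 1) = √((s + 1) / (s - 1)) := by
  have : (s + 1) / (s - 1) = (s + 1) ^ 2 / (s ^ 2 - 1) := by
    rw [div_eq_div_iff (by linarith) (by nlinarith)]
    ring
  rw [this, Real.sqrt_div (sq_nonneg _), Real.sqrt_sq (by linarith)]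

lemma strictAntiOn_add_one_div_sqrt_sq_sub_one :
    StrictAntiOn (fun s : ℝ => (s + 1) / √(s ^ 2 - 1)) (Ioi 1) := by
  intro a ha b hb hab
  rw [mem_Ioi] at ha hb
  simp only [add_one_div_sqrt_sq_sub_one_eq_sqrt_div ha, add_one_div_sqrt_sq_sub_one_eq_sqrt_div hb]
  apply Real.sqrt_lt_sqrt (by positivity)
  rw [div_lt_div_iff₀ (by linarith) (by linarith)]
  nlinarith

lemma strictAntiOn_log_mul_add_one_div_sqrt_sq_sub_one_sub {k C : ℝ} (hk : 0 < k) (hC : 0 ≤ C) :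
    StrictAntiOn (fun s : ℝ => log (k * ((s + 1) / √(s ^ 2 - 1))) - C * s) (Ioi 1) := by
  have hlog : StrictAntiOn (fun s : ℝ => log (k * ((s + 1) / √(s ^ 2 - 1)))) (Ioi 1) := by
    refine strictMonoOn_log.comp_strictAntiOn
      (fun a ha b hb hab => mul_lt_mul_of_pos_left
        (strictAntiOn_add_one_div_sqrt_sq_sub_one ha hb hab) hk) fun s (hs : 1 < s) => ?_
    have : 0 < s ^ 2 - 1 := by nlinarith
    exact mem_Ioi.2 (mul_pos hk (div_pos (by linarith) (Real.sqrt_pos.2 this)))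
  exact hlog.add_antitone fun a _ b _ hab => by nlinarith

section

variable {r : ℝ}

lemma sqrt_sqrt_sq_sub_one_eq_mul (hr : r ^ 2 ≤ 1) (h : ℝ) :
    √(√((1 - r ^ 2) * h ^ 2 + r ^ 2) ^ 2 - 1) = √(1 - r ^ 2) * √(h ^ 2 - 1) := by
  rw [Real.sq_sqrt (by nlinarith [sq_nonneg h]), ← Real.sqrt_mul (by linarith)]
  ring_nf

lemma add_one_div_sqrt_sq_sub_one_eq_mul (hr : r ^ 2 < 1) (h : ℝ) :
    (√((1 - r ^ 2) * h ^ 2 + r ^ 2) + 1) / √(h ^ 2 - 1) =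
      √(1 - r ^ 2) * ((√((1 - r ^ 2) * h ^ 2 + r ^ 2) + 1) /
        √(√((1 - r ^ 2) * h ^ 2 + r ^ 2) ^ 2 - 1)) := by
  have hk : √(1 - r ^ 2) ≠ 0 := (Real.sqrt_pos.2 (by linarith)).ne'
  rw [sqrt_sqrt_sq_sub_one_eq_mul hr.le, ← mul_div_assoc, mul_div_mul_left _ _ hk]

lemma strictMonoOn_sqrt_one_sub_sq_mul_sq_add_sq (hr : r ^ 2 < 1) :
    StrictMonoOn (fun h : ℝ => √((1 - r ^ 2) * h ^ 2 + r ^ 2)) (Ici 0) := by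
  intro a ha b hb hab
  rw [mem_Ici] at ha hb
  apply Real.sqrt_lt_sqrt (by nlinarith [sq_nonneg a])
  have : a ^ 2 < b ^ 2 := by nlinarith
  nlinarith

lemma mapsTo_sqrt_one_sub_sq_mul_sq_add_sq (hr : r ^ 2 < 1) :
    MapsTo (fun h : ℝ => √((1 - r ^ 2) * h ^ 2 + r ^ 2)) (Ioi 1) (Ioi 1) := by
  intro h hh
  rw [mem_Ioi] at hh ⊢
  rw [Real.lt_sqrt zero_le_one]
  nlinarith [mul_pos (sub_pos.2 hr) (by nlinarith : (0 : ℝ) < h ^ 2 - 1)]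

end

theorem F_strictAntiOn (r C : ℝ) (hr0 : 0 < r) (hr1 : r < 1) (hC : 0 < C) :
    StrictAntiOn
      (fun h : ℝ => Real.log ((Real.sqrt ((1 - r ^ 2) * h ^ 2 + r ^ 2) + 1) /
          Real.sqrt (h ^ 2 - 1)) -
        C * Real.sqrt ((1 - r ^ 2) * h ^ 2 + r ^ 2))
      (Set.Ioi 1) := by
  have hr : r ^ 2 < 1 := by nlinarith
  have hk : 0 < √(1 - r ^ 2) := Real.sqrt_pos.2 (by linarith)
  simp_rw [add_one_div_sqrt_sq_sub_one_eq_mul hr]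
  exact (strictAntiOn_log_mul_add_one_div_sqrt_sq_sub_one_sub hk hC.le).comp_strictMonoOn
    ((strictMonoOn_sqrt_one_sub_sq_mul_sq_add_sq hr).mono (Ioi_subset_Ici zero_le_one))
    (mapsTo_sqrt_one_sub_sq_mul_sq_add_sq hr)
end

section
/- Let 0 < r < 1, C > 0, and c ∈ ℝ, and define F(h) = log( (√((1 − r²)h² + r²) + 1) / √(h² − 1) ) − C·√((1 − r²)h² + r²). Then the set { h ∈ (1, ∞) : F(h) = c } contains at most one element. -/
/-!
Write `s(h) = √((1 - r²)h² + r²)`. Since `s² - 1 = (1 - r²)(h² - 1)`, the quantity under the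
logarithm squares to `(1 - r²)(s + 1)/(s - 1)`, so `F = G ∘ s` with
`G(t) = ½ log((1 - r²)(t + 1)/(t - 1)) - C t`. Here `s` maps `(1, ∞)` strictly increasingly into
`(1, ∞)`, where `G` is strictly decreasing, so `F` is strictly decreasing and takes each value at
most once.
-/

open Real Set

noncomputable section

namespace Frustum

variable {r C : ℝ}

def slantHeight (r h : ℝ) : ℝ := √((1 - r ^ 2) * h ^ 2 + r ^ 2)

def F (r C h : ℝ) : ℝ := log ((slantHeight r h + 1) / √(h ^ 2 - 1)) - C * slantHeight r h

def G (r C t : ℝ) : ℝ := log ((1 - r ^ 2) * (t + 1) / (t - 1)) / 2 - C * t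

lemma slantHeight_sq_sub_one (hr : r ^ 2 < 1) (h : ℝ) :
    slantHeight r h ^ 2 - 1 = (1 - r ^ 2) * (h ^ 2 - 1) := by
  rw [slantHeight, sq_sqrt (by nlinarith [sq_nonneg h])]
  ring

lemma one_lt_slantHeight (hr : r ^ 2 < 1) {h : ℝ} (hh : 1 < h) : 1 < slantHeight r h := by
  have hsq : 1 < slantHeight r h ^ 2 := by
    nlinarith [slantHeight_sq_sub_one hr h, mul_pos (sub_pos.2 hr) (by nlinarith : 0 < h ^ 2 - 1)]
  exact (one_lt_sq_iff₀ (sqrt_nonneg _)).1 hsq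

lemma strictMonoOn_slantHeight (hr : r ^ 2 < 1) : StrictMonoOn (slantHeight r) (Ici 0) := by
  intro a ha b hb hab
  have hsq : a ^ 2 < b ^ 2 := pow_lt_pow_left₀ hab ha two_ne_zero
  exact sqrt_lt_sqrt (by nlinarith [sq_nonneg a]) (by nlinarith)

lemma strictAntiOn_G (hr : r ^ 2 < 1) (hC : 0 ≤ C) : StrictAntiOn (G r C) (Ioi 1) := by
  intro a (ha : 1 < a) b (hb : 1 < b) hab
  have hratio : (1 - r ^ 2) * (b + 1) / (b - 1) < (1 - r ^ 2) * (a + 1) / (a - 1) := by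
    rw [div_lt_div_iff₀ (by linarith) (by linarith)]
    nlinarith
  have hlog := log_lt_log (by positivity) hratio
  unfold G
  nlinarith

lemma F_eq_G_slantHeight (hr : r ^ 2 < 1) {h : ℝ} (hh : 1 < h) :
    F r C h = G r C (slantHeight r h) := by
  set s := slantHeight r h
  have hs : 1 < s := one_lt_slantHeight hr hh
  have hh2 : 0 < h ^ 2 - 1 := by nlinarith
  have hsq : ((s + 1) / √(h ^ 2 - 1)) ^ 2 = (1 - r ^ 2) * (s + 1) / (s - 1) := by
    have hs2 : s ^ 2 - 1 = (1 - r ^ 2) * (h ^ 2 - 1) := slantHeight_sq_sub_one hr h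
    rw [div_pow, sq_sqrt hh2.le, div_eq_div_iff hh2.ne' (by linarith)]
    nlinarith
  rw [F, G, ← hsq, log_pow]
  ring

lemma strictAntiOn_F (hr : r ^ 2 < 1) (hC : 0 ≤ C) : StrictAntiOn (F r C) (Ioi 1) := by
  have hcomp : StrictAntiOn (G r C ∘ slantHeight r) (Ioi 1) :=
    (strictAntiOn_G hr hC).comp_strictMonoOn
      ((strictMonoOn_slantHeight hr).mono fun h (hh : 1 < h) ↦ mem_Ici.2 (by linarith))
      fun h hh ↦ one_lt_slantHeight hr hh
  exact hcomp.congr fun h hh ↦ (F_eq_G_slantHeight hr hh).symm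

end Frustum

end

theorem F_eq_const_subsingleton (r C c : ℝ) (hr0 : 0 < r) (hr1 : r < 1) (hC : 0 < C) :
    {h : ℝ | h ∈ Set.Ioi (1 : ℝ) ∧
      Real.log ((Real.sqrt ((1 - r ^ 2) * h ^ 2 + r ^ 2) + 1) / Real.sqrt (h ^ 2 - 1)) -
        C * Real.sqrt ((1 - r ^ 2) * h ^ 2 + r ^ 2) = c}.Subsingleton := by
  have hr : r ^ 2 < 1 := by nlinarith
  intro a ⟨ha, hFa⟩ b ⟨hb, hFb⟩
  exact (Frustum.strictAntiOn_F hr hC.le).injOn ha hb (hFa.trans hFb.symm)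
end

section
/- Let r > 1 and C > 0, and define F(h) = log( (√((1 − r²)h² + r²) + 1) / √(h² − 1) ) − C·√((1 − r²)h² + r²). Then the set { h ∈ (1, r/√(r² − 1)) : F(h) = (1/2)·log(r² − 1) } contains at most one element. -/
/-!
Put `t = √((1 - r²)h² + r²)`, which lies in `(0, 1)` for `h` in the interval and determines `h`.
Since `h² - 1 = (1 - t²) / (r² - 1)`, the equation becomes `artanh t = C t`. As `artanh` is strictly
convex on `[0, 1)` and vanishes at `0`, its secant slope `artanh t / t` is strictly increasing,
so it takes the value `C` at most once.
-/

open Real Set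

theorem StrictConvexOn.injOn_slope {𝕜 : Type*} [Field 𝕜] [LinearOrder 𝕜] [IsStrictOrderedRing 𝕜]
    {s : Set 𝕜} {f : 𝕜 → 𝕜} (hf : StrictConvexOn 𝕜 s f) {a : 𝕜} (ha : a ∈ s) :
    InjOn (fun x => (f x - f a) / (x - a)) (s \ {a}) :=
  StrictMonoOn.injOn fun _ hx _ hy hxy => hf.secant_strict_mono ha hx.1 hy.1 hx.2 hy.2 hxy

namespace Real

theorem hasDerivAt_artanh {x : ℝ} (hx : x ∈ Ioo (-1) 1) :
    HasDerivAt artanh (1 / (1 - x ^ 2)) x := by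
  have h₁ : 0 < 1 + x := by linarith [hx.1]
  have h₂ : 0 < 1 - x := by linarith [hx.2]
  have hlog : HasDerivAt (fun y => 1 / 2 * (log (1 + y) - log (1 - y)))
      (1 / 2 * (1 / (1 + x) - -1 / (1 - x))) x := by
    have := (((hasDerivAt_id x).const_add 1).log h₁.ne').sub
      (((hasDerivAt_id x).const_sub 1).log h₂.ne')
    simpa using this.const_mul (1 / 2 : ℝ)
  have heq : artanh =ᶠ[nhds x] fun y => 1 / 2 * (log (1 + y) - log (1 - y)) := by
    filter_upwards [Ioo_mem_nhds hx.1 hx.2] with y hy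
    rw [artanh_eq_half_log (Ioo_subset_Icc_self hy),
      log_div (by linarith [hy.1]) (by linarith [hy.2])]
  refine (hlog.congr_of_eventuallyEq heq).congr_deriv ?_
  rw [show 1 - x ^ 2 = (1 + x) * (1 - x) by ring]
  field_simp
  ring

theorem strictConvexOn_artanh : StrictConvexOn ℝ (Ico 0 1) artanh := by
  have hI : ∀ x ∈ Ico (0 : ℝ) 1, x ∈ Ioo (-1) 1 := fun x hx => ⟨by linarith [hx.1], hx.2⟩
  refine StrictMonoOn.strictConvexOn_of_deriv (convex_Ico 0 1)
    (fun x hx => (hasDerivAt_artanh (hI x hx)).continuousAt.continuousWithinAt) ?_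
  rw [interior_Ico]
  intro x hx y hy hxy
  rw [(hasDerivAt_artanh (hI x (Ioo_subset_Ico_self hx))).deriv,
    (hasDerivAt_artanh (hI y (Ioo_subset_Ico_self hy))).deriv]
  have : 0 < 1 - y ^ 2 := by nlinarith [hy.2, hy.1]
  gcongr
  exact hx.1.le

end Real

theorem one_sub_sq_mul_sq_add_sq_mem_Ioo {r h : ℝ} (hr : 1 < r)
    (hh : h ∈ Ioo 1 (r / √(r ^ 2 - 1))) : (1 - r ^ 2) * h ^ 2 + r ^ 2 ∈ Ioo 0 1 := by
  have hr₁ : 0 < r ^ 2 - 1 := by nlinarith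
  have hs : 0 < √(r ^ 2 - 1) := sqrt_pos.2 hr₁
  have hlt : h * √(r ^ 2 - 1) < r := (lt_div_iff₀ hs).1 hh.2
  have hsq : (h * √(r ^ 2 - 1)) ^ 2 = h ^ 2 * (r ^ 2 - 1) := by rw [mul_pow, sq_sqrt hr₁.le]
  have hpos : 0 < h * √(r ^ 2 - 1) := mul_pos (by linarith [hh.1]) hs
  have hh₁ : 0 < h ^ 2 - 1 := by nlinarith [hh.1]
  constructor <;> nlinarith [mul_pos hr₁ hh₁]

theorem log_div_sqrt_eq_half_log_add_artanh {r h t : ℝ} (hr : 1 < r) (ht : t ∈ Ioo (-1) 1)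
    (hth : t ^ 2 = (1 - r ^ 2) * h ^ 2 + r ^ 2) :
    log ((t + 1) / √(h ^ 2 - 1)) = 1 / 2 * log (r ^ 2 - 1) + artanh t := by
  have hr₁ : 0 < r ^ 2 - 1 := by nlinarith
  have h₁ : 0 < 1 + t := by linarith [ht.1]
  have h₂ : 0 < 1 - t := by linarith [ht.2]
  have hh : h ^ 2 - 1 = (1 - t) * (1 + t) / (r ^ 2 - 1) := by
    rw [eq_div_iff hr₁.ne']
    linear_combination hth
  have hh₁ : 0 < h ^ 2 - 1 := by rw [hh]; positivity
  rw [artanh_eq_half_log (Ioo_subset_Icc_self ht), log_div h₁.ne' h₂.ne', add_comm t,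
    log_div h₁.ne' (sqrt_pos.2 hh₁).ne', log_sqrt hh₁.le, hh,
    log_div (by positivity) hr₁.ne', log_mul h₂.ne' h₁.ne']
  ring

theorem artanh_slope_eq_of_critical {r C h : ℝ} (hr : 1 < r)
    (hh : h ∈ Ioo 1 (r / √(r ^ 2 - 1)))
    (hF : log ((√((1 - r ^ 2) * h ^ 2 + r ^ 2) + 1) / √(h ^ 2 - 1)) -
        C * √((1 - r ^ 2) * h ^ 2 + r ^ 2) = 1 / 2 * log (r ^ 2 - 1)) :
    √((1 - r ^ 2) * h ^ 2 + r ^ 2) ∈ Ico 0 1 \ {0} ∧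
      (artanh √((1 - r ^ 2) * h ^ 2 + r ^ 2) - artanh 0) /
        (√((1 - r ^ 2) * h ^ 2 + r ^ 2) - 0) = C := by
  obtain ⟨hq₀, hq₁⟩ := one_sub_sq_mul_sq_add_sq_mem_Ioo hr hh
  set t := √((1 - r ^ 2) * h ^ 2 + r ^ 2)
  have ht : 0 < t := sqrt_pos.2 hq₀
  have ht₁ : t < 1 := by rw [sqrt_lt' one_pos, one_pow]; exact hq₁
  rw [log_div_sqrt_eq_half_log_add_artanh hr ⟨by linarith, ht₁⟩ (sq_sqrt hq₀.le)] at hF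
  refine ⟨⟨⟨ht.le, ht₁⟩, ht.ne'⟩, ?_⟩
  rw [artanh_zero, sub_zero, sub_zero, div_eq_iff ht.ne']
  linarith

theorem F_critical_subsingleton_general (r C : ℝ) (hr : 1 < r) :
    {h : ℝ | h ∈ Set.Ioo (1 : ℝ) (r / Real.sqrt (r ^ 2 - 1)) ∧
      Real.log ((Real.sqrt ((1 - r ^ 2) * h ^ 2 + r ^ 2) + 1) / Real.sqrt (h ^ 2 - 1)) -
        C * Real.sqrt ((1 - r ^ 2) * h ^ 2 + r ^ 2) =
        (1 / 2) * Real.log (r ^ 2 - 1)}.Subsingleton := by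
  rintro h₁ ⟨hh₁, hF₁⟩ h₂ ⟨hh₂, hF₂⟩
  obtain ⟨ht₁, hs₁⟩ := artanh_slope_eq_of_critical hr hh₁ hF₁
  obtain ⟨ht₂, hs₂⟩ := artanh_slope_eq_of_critical hr hh₂ hF₂
  have ht := strictConvexOn_artanh.injOn_slope (left_mem_Ico.2 one_pos) ht₁ ht₂ (hs₁.trans hs₂.symm)
  rw [sqrt_inj (one_sub_sq_mul_sq_add_sq_mem_Ioo hr hh₁).1.le
    (one_sub_sq_mul_sq_add_sq_mem_Ioo hr hh₂).1.le] at ht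
  have hsq : h₁ ^ 2 = h₂ ^ 2 := mul_left_cancel₀ (by nlinarith : 1 - r ^ 2 ≠ 0) (by linarith)
  exact (sq_eq_sq₀ (by linarith [hh₁.1]) (by linarith [hh₂.1])).1 hsq

theorem F_critical_subsingleton (r C : ℝ) (hr : 1 < r) (hC : 0 < C) :
    {h : ℝ | h ∈ Set.Ioo (1 : ℝ) (r / Real.sqrt (r ^ 2 - 1)) ∧
      Real.log ((Real.sqrt ((1 - r ^ 2) * h ^ 2 + r ^ 2) + 1) / Real.sqrt (h ^ 2 - 1)) -
        C * Real.sqrt ((1 - r ^ 2) * h ^ 2 + r ^ 2) =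
        (1 / 2) * Real.log (r ^ 2 - 1)}.Subsingleton :=
  F_critical_subsingleton_general r C hr
end

section
/- Let V : ℝ → ℝ be continuous on [0, ∞), strictly increasing on [0, 1] with V(1) > 0, differentiable on (1, ∞), suppose V(h) tends to 0 as h → +∞, suppose the derivative V′(h) tends to +∞ as h ↓ 1, and suppose the set { h ∈ (1, ∞) : V′(h) = 0 } contains at most one element. Then there exists a unique h* ∈ (1, ∞) such that V(h*) ≥ V(h) for all h ∈ [0, ∞), and V(h*) > V(h) for all h ∈ [0, ∞) with h ≠ h*. -/
/-!
Since `V' → +∞` as `h ↓ 1`, `V` increases just to the right of `1`, so some value of `V` on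
`(1, ∞)` exceeds `V 1 > 0`; as `V → 0` at infinity, the extreme value theorem gives a maximum of
`V` on `[1, ∞)`, attained in the open interval `(1, ∞)`. Monotonicity on `[0, 1]` makes it a
maximum on `[0, ∞)`. Every maximiser in `(1, ∞)` is a critical point, and there is at most one of
those, so the maximiser is unique, hence strict.
-/

open Set Filter Topology

theorem exists_right_apply_gt_of_eventually_deriv_pos {f f' : ℝ → ℝ} {b : ℝ}
    (hf : ContinuousOn f (Ici b)) (hderiv : ∀ x ∈ Ioi b, HasDerivAt f (f' x) x)
    (hpos : ∀ᶠ x in 𝓝[>] b, 0 < f' x) : ∃ a > b, f b < f a := by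
  obtain ⟨u, hbu, hu⟩ := mem_nhdsGT_iff_exists_Ioo_subset.mp hpos
  obtain ⟨a, hba, hau⟩ := exists_between (mem_Ioi.mp hbu)
  obtain ⟨c, hc, hslope⟩ := exists_hasDerivAt_eq_slope f f' hba (hf.mono Icc_subset_Ici_self)
    fun x hx => hderiv x hx.1
  have hslope_pos : 0 < (f a - f b) / (a - b) := hslope ▸ hu ⟨hc.1, hc.2.trans hau⟩
  exact ⟨a, hba, sub_pos.mp ((div_pos_iff_of_pos_right (sub_pos.mpr hba)).mp hslope_pos)⟩

theorem ContinuousOn.exists_isMaxOn_Ici_of_tendsto_atTop {α : Type*} [LinearOrder α]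
    [TopologicalSpace α] [OrderTopology α] {f : ℝ → α} {b x₀ : ℝ} {L : α}
    (hf : ContinuousOn f (Ici b)) (hL : Tendsto f atTop (𝓝 L)) (hx₀ : x₀ ∈ Ici b)
    (hlt : L < f x₀) : ∃ x ∈ Ici b, IsMaxOn f (Ici b) x := by
  refine hf.exists_isMaxOn' isClosed_Ici hx₀ ?_
  rw [cocompact_eq_atBot_atTop, inf_sup_right, (disjoint_atBot_principal_Ici b).eq_bot,
    bot_sup_eq]
  exact (hL.eventually (ge_mem_nhds hlt)).filter_mono inf_le_left

theorem IsMaxOn.lt_of_ne {α β : Type*} [LinearOrder β] {f : α → β} {s : Set α} {c : α}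
    (hc : IsMaxOn f s c) (huniq : ∀ x ∈ s, IsMaxOn f s x → x = c) :
    ∀ x ∈ s, x ≠ c → f x < f c := by
  intro x hx hne
  refine (hc hx).lt_of_ne fun heq => hne (huniq x hx fun y hy => ?_)
  exact heq ▸ hc hy

theorem volume_unique_max (V V' : ℝ → ℝ)
    (hcont : ContinuousOn V (Set.Ici 0))
    (hmono : StrictMonoOn V (Set.Icc 0 1))
    (hV1 : 0 < V 1)
    (hderiv : ∀ h ∈ Set.Ioi (1 : ℝ), HasDerivAt V (V' h) h)
    (hlim0 : Filter.Tendsto V Filter.atTop (nhds 0))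
    (hlim' : Filter.Tendsto V' (nhdsWithin 1 (Set.Ioi 1)) Filter.atTop)
    (hcrit : {h : ℝ | h ∈ Set.Ioi (1 : ℝ) ∧ V' h = 0}.Subsingleton) :
    ∃! hstar : ℝ, hstar ∈ Set.Ioi (1 : ℝ) ∧
      (∀ h ∈ Set.Ici (0 : ℝ), V h ≤ V hstar) ∧
      (∀ h ∈ Set.Ici (0 : ℝ), h ≠ hstar → V h < V hstar) := by
  have hcont1 : ContinuousOn V (Ici 1) := hcont.mono (Ici_subset_Ici.mpr zero_le_one)
  obtain ⟨a, ha1, hVa⟩ := exists_right_apply_gt_of_eventually_deriv_pos hcont1 hderiv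
    (hlim'.eventually_gt_atTop 0)
  obtain ⟨c, hc1, hcmax1⟩ :=
    hcont1.exists_isMaxOn_Ici_of_tendsto_atTop hlim0 ha1.le (hV1.trans hVa)
  have hVc : V 1 < V c := hVa.trans_le (hcmax1 ha1.le)
  have hc1' : 1 < c := lt_of_le_of_ne hc1 (by rintro rfl; exact hVc.false)
  have hc0 : c ∈ Ici (0 : ℝ) := zero_le_one.trans (mem_Ici.mp hc1)
  have hle1 : ∀ x ∈ Ici (0 : ℝ), x ≤ 1 → V x ≤ V 1 := fun x hx hx1 =>
    hmono.monotoneOn ⟨hx, hx1⟩ ⟨zero_le_one, le_rfl⟩ hx1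
  have hcmax : IsMaxOn V (Ici 0) c := fun x hx => by
    rcases le_or_gt x 1 with hx1 | hx1
    · exact (hle1 x hx hx1).trans hVc.le
    · exact hcmax1 hx1.le
  have hcritical : ∀ x ∈ Ioi (1 : ℝ), IsMaxOn V (Ici 0) x → V' x = 0 := fun x hx hxmax =>
    (hxmax.isLocalMax (Ici_mem_nhds (zero_lt_one.trans hx))).hasDerivAt_eq_zero (hderiv x hx)
  have huniq : ∀ x ∈ Ici (0 : ℝ), IsMaxOn V (Ici 0) x → x = c := fun x hx hxmax => by
    rcases le_or_gt x 1 with hx1 | hx1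
    · exact absurd ((hxmax hc0).trans (hle1 x hx hx1)) hVc.not_ge
    · exact hcrit ⟨hx1, hcritical x hx1 hxmax⟩ ⟨hc1', hcritical c hc1' hcmax⟩
  have hstrict := hcmax.lt_of_ne huniq
  refine ⟨c, ⟨hc1', hcmax, hstrict⟩, fun y ⟨hy1, _, hy⟩ => ?_⟩
  by_contra hne
  exact (hy c hc0 (Ne.symm hne)).asymm
    (hstrict y (le_of_lt (zero_lt_one.trans (mem_Ioi.mp hy1))) hne)
end

section
/- Let r > 0, 0 < θ < π/2 with r cos θ < 1, and h > 0. Define vectors in ℝ⁴: û₀ = (0, −1, 0, 0), û₁ = (0, cos θ, −sin θ, 0), û₂ = (1/√((1 − r²cos²θ)h² + r²cos²θ))·(h r cos θ, 0, h, r cos θ), û₃ = (0, 0, 0, −1). Then ⟨ûᵢ, ûᵢ⟩_L = 1 for i = 0, 1, 2, 3; ⟨û₀, û₂⟩_L = ⟨û₀, û₃⟩_L = ⟨û₁, û₃⟩_L = 0; −⟨û₀, û₁⟩_L = cos θ; −⟨û₁, û₂⟩_L = h sin θ / √((1 − r²cos²θ)h² + r²cos²θ); and −⟨û₂, û₃⟩_L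 = r cos θ / √((1 − r²cos²θ)h² + r²cos²θ). -/
/-! All identities are coordinate computations; the substantive one is
`⟨û₂, û₂⟩_L = 1`: `û₂` normalizes `v = (h r cos θ, 0, h, r cos θ)`, whose Lorentzian square is
`D = (1 − r² cos² θ) h² + r² cos² θ`, and `D ≥ r² cos² θ > 0` because `0 < r cos θ < 1`. -/

open Real

/-- The Lorentzian inner product on `ℝ⁴`:
`⟨x, y⟩_L = −x₀y₀ + x₁y₁ + x₂y₂ + x₃y₃`. -/
def lorentzianInner (x y : Fin 4 → ℝ) : ℝ :=
  -(x 0 * y 0) + x 1 * y 1 + x 2 * y 2 + x 3 * y 3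

@[simp]
theorem lorentzianInner_vec (a₀ a₁ a₂ a₃ b₀ b₁ b₂ b₃ : ℝ) :
    lorentzianInner ![a₀, a₁, a₂, a₃] ![b₀, b₁, b₂, b₃] =
      -(a₀ * b₀) + a₁ * b₁ + a₂ * b₂ + a₃ * b₃ :=
  rfl

@[simp]
theorem lorentzianInner_smul_left (c : ℝ) (x y : Fin 4 → ℝ) :
    lorentzianInner (c • x) y = c * lorentzianInner x y := by
  simp only [lorentzianInner, Pi.smul_apply, smul_eq_mul]
  ring

@[simp]
theorem lorentzianInner_smul_right (c : ℝ) (x y : Fin 4 → ℝ) :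
    lorentzianInner x (c • y) = c * lorentzianInner x y := by
  simp only [lorentzianInner, Pi.smul_apply, smul_eq_mul]
  ring

theorem lorentzianInner_inv_sqrt_smul_self {x : Fin 4 → ℝ} (hx : 0 < lorentzianInner x x) :
    lorentzianInner ((1 / √(lorentzianInner x x)) • x) ((1 / √(lorentzianInner x x)) • x) = 1 := by
  have hsq : √(lorentzianInner x x) ^ 2 = lorentzianInner x x := sq_sqrt hx.le
  simp only [lorentzianInner_smul_left, lorentzianInner_smul_right]
  field_simp
  exact hsq.symm

theorem one_sub_mul_sq_add_pos {a : ℝ} (ha₀ : 0 < a) (ha₁ : a ≤ 1) (h : ℝ) :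
    0 < (1 - a) * h ^ 2 + a := by
  have : 0 ≤ (1 - a) * h ^ 2 := mul_nonneg (sub_nonneg.mpr ha₁) (sq_nonneg h)
  linarith

theorem face_pole_vectors_general (r θ h : ℝ) (hr : 0 < r) (hθ0 : 0 < θ) (hθ1 : θ < π / 2)
    (hrθ : r * Real.cos θ < 1) :
    let u0 : Fin 4 → ℝ := ![0, -1, 0, 0]
    let u1 : Fin 4 → ℝ := ![0, Real.cos θ, -Real.sin θ, 0]
    let u2 : Fin 4 → ℝ :=
      (1 / Real.sqrt ((1 - r ^ 2 * Real.cos θ ^ 2) * h ^ 2 + r ^ 2 * Real.cos θ ^ 2)) •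
        ![h * r * Real.cos θ, 0, h, r * Real.cos θ]
    let u3 : Fin 4 → ℝ := ![0, 0, 0, -1]
    lorentzianInner u0 u0 = 1 ∧ lorentzianInner u1 u1 = 1 ∧
      lorentzianInner u2 u2 = 1 ∧ lorentzianInner u3 u3 = 1 ∧
      lorentzianInner u0 u2 = 0 ∧ lorentzianInner u0 u3 = 0 ∧
      lorentzianInner u1 u3 = 0 ∧
      -lorentzianInner u0 u1 = Real.cos θ ∧
      -lorentzianInner u1 u2 =
        h * Real.sin θ /
          Real.sqrt ((1 - r ^ 2 * Real.cos θ ^ 2) * h ^ 2 + r ^ 2 * Real.cos θ ^ 2) ∧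
      -lorentzianInner u2 u3 =
        r * Real.cos θ /
          Real.sqrt ((1 - r ^ 2 * Real.cos θ ^ 2) * h ^ 2 + r ^ 2 * Real.cos θ ^ 2) := by
  intro u0 u1 u2 u3
  have hv : lorentzianInner ![h * r * cos θ, 0, h, r * cos θ] ![h * r * cos θ, 0, h, r * cos θ] =
      (1 - r ^ 2 * cos θ ^ 2) * h ^ 2 + r ^ 2 * cos θ ^ 2 := by
    rw [lorentzianInner_vec]
    ring
  have hrc : 0 < r * cos θ := mul_pos hr (cos_pos_of_mem_Ioo ⟨by linarith, hθ1⟩)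
  have hu2 : lorentzianInner u2 u2 = 1 := by
    have hpos := one_sub_mul_sq_add_pos (pow_pos hrc 2) (pow_le_one₀ hrc.le hrθ.le) h
    rw [mul_pow, ← hv] at hpos
    simpa only [hv] using lorentzianInner_inv_sqrt_smul_self hpos
  refine ⟨by norm_num [u0], by simp [u1, ← sq], hu2, by norm_num [u3], by simp [u0, u2],
    by norm_num [u0, u3], by simp [u1, u3], by simp [u0, u1], ?_, ?_⟩
  · simp only [u1, u2, lorentzianInner_smul_right, lorentzianInner_vec]
    ring
  · simp only [u2, u3, lorentzianInner_smul_left, lorentzianInner_vec]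
    ring

theorem face_pole_vectors (r θ h : ℝ) (hr : 0 < r) (hθ0 : 0 < θ) (hθ1 : θ < π / 2)
    (hrθ : r * Real.cos θ < 1) (hh : 0 < h) :
    let u0 : Fin 4 → ℝ := ![0, -1, 0, 0]
    let u1 : Fin 4 → ℝ := ![0, Real.cos θ, -Real.sin θ, 0]
    let u2 : Fin 4 → ℝ :=
      (1 / Real.sqrt ((1 - r ^ 2 * Real.cos θ ^ 2) * h ^ 2 + r ^ 2 * Real.cos θ ^ 2)) •
        ![h * r * Real.cos θ, 0, h, r * Real.cos θ]
    let u3 : Fin 4 → ℝ := ![0, 0, 0, -1]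
    lorentzianInner u0 u0 = 1 ∧ lorentzianInner u1 u1 = 1 ∧
      lorentzianInner u2 u2 = 1 ∧ lorentzianInner u3 u3 = 1 ∧
      lorentzianInner u0 u2 = 0 ∧ lorentzianInner u0 u3 = 0 ∧
      lorentzianInner u1 u3 = 0 ∧
      -lorentzianInner u0 u1 = Real.cos θ ∧
      -lorentzianInner u1 u2 =
        h * Real.sin θ /
          Real.sqrt ((1 - r ^ 2 * Real.cos θ ^ 2) * h ^ 2 + r ^ 2 * Real.cos θ ^ 2) ∧
      -lorentzianInner u2 u3 =
        r * Real.cos θ /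
          Real.sqrt ((1 - r ^ 2 * Real.cos θ ^ 2) * h ^ 2 + r ^ 2 * Real.cos θ ^ 2) :=
  face_pole_vectors_general r θ h hr hθ0 hθ1 hrθ
end
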